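/- The characteristic of every non-degenerate triangle formed by the seven points P₁,…,P₇ of the first integral heptagon equals 2002; in particular, for the triangle with side lengths 22270, 22098, 21488 (points P₁,P₂,P₃), the squarefree part of (a+b+c)(a+b−c)(a−b+c)(−a+b+c) equals 2002. -/

import Mathlib

/-- The distance matrix of the first integral heptagon in general position. -/
def D : Matrix (Fin 7) (Fin 7) ℕ :=
  !![    0, 22270, 22098, 16637,  9248,  8908,  8636;
     22270,     0, 21488, 11397, 15138, 20698, 13746;
     22098, 21488,     0, 10795, 14450, 13430, 20066;
     16637, 11397, 10795,     0,  7395, 11135, 11049;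
      9248, 15138, 14450,  7395,     0,  5780,  5916;
      8908, 20698, 13430, 11135,  5780,     0, 10744;
      8636, 13746, 20066, 11049,  5916, 10744,     0]

/-- The Heron product `(a+b+c)(a+b−c)(a−b+c)(−a+b+c)` of a triple of integers. -/
def heron (a b c : ℤ) : ℤ := (a + b + c) * (a + b - c) * (a - b + c) * (-a + b + c)

/-! A finite computation: each Heron product is a nonnegative multiple of `2002` whose quotient
by `2002` is a perfect square, tested with `Nat.sqrt`. Both `Nat.sqrt` and `Nat.minSqFac` are
defined by well-founded recursion, which `decide` cannot evaluate during elaboration but the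
kernel unfolds, hence `decide +kernel`. -/

theorem Int.exists_eq_mul_sq_iff {c : ℕ} (hc : 0 < c) (x : ℤ) :
    (∃ m : ℕ, x = c * (m : ℤ) ^ 2) ↔ 0 ≤ x ∧ (c : ℤ) ∣ x ∧ IsSquare (x / c).toNat := by
  constructor
  · rintro ⟨m, rfl⟩
    refine ⟨by positivity, dvd_mul_right _ _, m, ?_⟩
    rw [Int.mul_ediv_cancel_left _ (by exact_mod_cast hc.ne'), sq]
    exact_mod_cast Int.toNat_natCast (m * m)
  · rintro ⟨hx, hdvd, r, hr⟩
    have hq : x / c = r * r := by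
      rw [← Int.toNat_of_nonneg (Int.ediv_nonneg hx (by positivity)), hr]
      push_cast; rfl
    exact ⟨r, by rw [← Int.mul_ediv_cancel' hdvd, hq]; ring⟩

theorem heron_D_eq_mul_sq (i j k : Fin 7) (hij : i ≠ j) (hik : i ≠ k) (hjk : j ≠ k) :
    ∃ m : ℕ, heron (D i j) (D i k) (D j k) = 2002 * (m : ℤ) ^ 2 := by
  refine (Int.exists_eq_mul_sq_iff (c := 2002) (by norm_num) _).2 ?_
  revert i j k
  decide +kernel

theorem heptagon_characteristic_eq_2002 :
    Squarefree (2002 : ℕ) ∧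
    (∀ i j k : Fin 7, i ≠ j → i ≠ k → j ≠ k →
      ∃ m : ℕ, heron (D i j) (D i k) (D j k) = 2002 * (m : ℤ) ^ 2) ∧
    (∃ m : ℕ, heron 22270 22098 21488 = 2002 * (m : ℤ) ^ 2) := by
  refine ⟨by decide +kernel, heron_D_eq_mul_sq, ?_⟩
  exact heron_D_eq_mul_sq 0 1 2 (by decide) (by decide) (by decide)
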